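/- Let (X,Y) ∈ [0,1]^d × {-1,1} be a random couple with distribution P whose regression function η and marginal Π satisfy the low noise assumption with parameters B, γ > 0. Then there exists a constant D3 > 0 depending only on B and γ such that for every bounded measurable f : [0,1]^d → ℝ, R_P(f) − R* ≥ D3 · Π(x : sign f(x) ≠ sign η(x))^{(1+γ)/γ}. -/

import Mathlib

open MeasureTheory ProbabilityTheory Set

noncomputable section

namespace ActivePlugIn

variable {d : ℕ}

/-- The unit cube `[0,1]^d`. -/
def cube (d : ℕ) : Set (Fin d → ℝ) := Set.Icc 0 1

/-- Sign function (with the convention `sgn 0 = -1`). -/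
def sgn (t : ℝ) : ℝ := if 0 < t then 1 else -1

/-- Binary classification risk `R_P(f) = P(Y ≠ sign f(X))`. -/
def risk (P : Measure ((Fin d → ℝ) × ℝ)) (f : (Fin d → ℝ) → ℝ) : ℝ :=
  (P {p | p.2 ≠ sgn (f p.1)}).toReal

/-- Bayes risk: infimum of the risk over all measurable `g : [0,1]^d → [-1,1]`. -/
def bayesRisk (P : Measure ((Fin d → ℝ) × ℝ)) : ℝ :=
  ⨅ g : {g : (Fin d → ℝ) → ℝ // Measurable g ∧ ∀ x, g x ∈ Set.Icc (-1 : ℝ) 1},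
    risk P g.1

/-- `η` is (a version of) the regression function `E(Y | X = x)` of `P`. -/
def IsRegressionOf (η : (Fin d → ℝ) → ℝ) (P : Measure ((Fin d → ℝ) × ℝ)) : Prop :=
  ∀ s : Set (Fin d → ℝ), MeasurableSet s →
    ∫ p in Prod.fst ⁻¹' s, p.2 ∂P = ∫ x in s, η x ∂(P.map Prod.fst)

/-- `P` is a distribution of a random couple `(X,Y) ∈ [0,1]^d × {-1,1}` with
regression function `η`. -/
def GoodPair (d : ℕ) (P : Measure ((Fin d → ℝ) × ℝ)) (η : (Fin d → ℝ) → ℝ) : Prop :=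
  IsProbabilityMeasure P ∧ Measurable η ∧ (∀ x, η x ∈ Set.Icc (-1 : ℝ) 1) ∧
    (∀ᵐ p ∂P, p.1 ∈ cube d ∧ (p.2 = 1 ∨ p.2 = -1)) ∧ IsRegressionOf η P

/-- Tsybakov's low noise assumption with constants `B, γ`. -/
def LowNoise (B γ : ℝ) (μ : Measure (Fin d → ℝ)) (η : (Fin d → ℝ) → ℝ) : Prop :=
  ∀ t : ℝ, 0 < t → μ {x | |η x| ≤ t} ≤ ENNReal.ofReal (B * t ^ γ)

/-- Index of the level-`m` dyadic cube containing `x`. -/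
def cubeIdx (m : ℕ) (x : Fin d → ℝ) : Fin d → ℕ := fun i => ⌊x i * 2 ^ m⌋₊

/-- The (half-open) level-`m` dyadic cube with index `k`. -/
def dyadicCube (d m : ℕ) (k : Fin d → ℕ) : Set (Fin d → ℝ) :=
  {x | ∀ i, (k i : ℝ) / 2 ^ m ≤ x i ∧ x i < ((k i : ℝ) + 1) / 2 ^ m}

/-- Support of a measure: points all of whose open neighbourhoods have positive mass. -/
def suppSet (μ : Measure (Fin d → ℝ)) : Set (Fin d → ℝ) :=
  {x | ∀ U : Set (Fin d → ℝ), IsOpen U → x ∈ U → μ U ≠ 0}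

/-- `A` belongs to the sigma-algebra generated by level-`m` dyadic cubes,
i.e. it is a union of level-`m` dyadic cubes. -/
def IsDyadicUnion (d m : ℕ) (A : Set (Fin d → ℝ)) : Prop :=
  ∃ S : Set (Fin d → ℕ), A = ⋃ k ∈ S, dyadicCube d m k

/-- `(u1,u2)`-regularity of a measure with respect to the dyadic partitions. -/
def Regular (d : ℕ) (u1 u2 : ℝ) (μ : Measure (Fin d → ℝ)) : Prop :=
  ∀ m : ℕ, 1 ≤ m → ∀ k : Fin d → ℕ, (∀ i, k i < 2 ^ m) →
    (dyadicCube d m k ∩ suppSet μ).Nonempty →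
    ENNReal.ofReal (u1 / 2 ^ (d * m)) ≤ μ (dyadicCube d m k) ∧
      μ (dyadicCube d m k) ≤ ENNReal.ofReal (u2 / 2 ^ (d * m))

/-- The `L²(μ)`-projection `η̄_m` of `η` onto piecewise-constant functions over the
level-`m` dyadic partition: on each cube it is the `μ`-average of `η` over that cube. -/
def etaBar (μ : Measure (Fin d → ℝ)) (η : (Fin d → ℝ) → ℝ) (m : ℕ) (x : Fin d → ℝ) : ℝ :=
  ⨍ y in dyadicCube d m (cubeIdx m x), η y ∂μ

/-- `A` approximates the decision boundary at level `t`. -/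
def ApproxBoundary (μ : Measure (Fin d → ℝ)) (η : (Fin d → ℝ) → ℝ) (t : ℝ)
    (A : Set (Fin d → ℝ)) : Prop :=
  {x | |η x| ≤ t} ∩ suppSet μ ⊆ A ∩ suppSet μ ∧
    A ∩ suppSet μ ⊆ {x | |η x| ≤ 3 * t} ∩ suppSet μ

/-- Assumption 2 of the paper, with constant `B2`. -/
def Assumption2 (d : ℕ) (B2 : ℝ) (μ : Measure (Fin d → ℝ)) (η : (Fin d → ℝ) → ℝ) : Prop :=
  ∀ m : ℕ, 1 ≤ m → ∀ A : Set (Fin d → ℝ), IsDyadicUnion d m A →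
    (∃ t : ℝ, 0 < t ∧ ApproxBoundary μ η t A) → (A ∩ suppSet μ).Nonempty →
    B2 * (⨆ x ∈ A ∩ suppSet μ, |η x - etaBar μ η m x|) ^ 2 ≤
      ∫ x, (η x - etaBar μ η m x) ^ 2 ∂(μ[|A ∩ suppSet μ])

/-- The law of the label `Y ∈ {-1,1}` given `X = x`: `P(Y = 1|X = x) = (1 + η(x))/2`. -/
def labelKernel (d : ℕ) (η : (Fin d → ℝ) → ℝ) (x : Fin d → ℝ) : Measure ℝ :=
  ENNReal.ofReal ((1 + η x) / 2) • Measure.dirac 1 +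
    ENNReal.ofReal ((1 - η x) / 2) • Measure.dirac (-1)

/-- The joint law of `(X,Y)` when `X ∼ μ` and `P(Y = 1|X = x) = (1 + η(x))/2`. -/
def jointMeasure (d : ℕ) (μ : Measure (Fin d → ℝ)) (η : (Fin d → ℝ) → ℝ) :
    Measure ((Fin d → ℝ) × ℝ) :=
  μ.bind fun x => (labelKernel d η x).map fun y => (x, y)

/-- The law of the trajectory `(X_1,Y_1,…,X_N,Y_N)` of an active learning procedure:
`X_k` is sampled from the kernel `samp` applied to the past observations and `Y_k` is
sampled from the conditional label distribution determined by `η`. -/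
def traj (d : ℕ) (η : (Fin d → ℝ) → ℝ)
    (samp : (k : ℕ) → (Fin k → ((Fin d → ℝ) × ℝ)) → Measure (Fin d → ℝ)) :
    (N : ℕ) → Measure (Fin N → ((Fin d → ℝ) × ℝ))
  | 0 => Measure.dirac fun i => i.elim0
  | (N + 1) =>
      (traj d η samp N).bind fun h =>
        (samp N h).bind fun x => (labelKernel d η x).map fun y => Fin.snoc h (x, y)

/-- Kullback–Leibler divergence `KL(P,Q) = ∫ log (dP/dQ) dP`. -/
def kl {Ω : Type*} [MeasurableSpace Ω] (P Q : Measure Ω) : ℝ :=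
  ∫ ω, Real.log ((P.rnDeriv Q ω).toReal) ∂P

/-- Multivariate Taylor polynomial of degree `n` of `g` at `x`, evaluated at `x1`. -/
def taylorP (d : ℕ) (g : (Fin d → ℝ) → ℝ) (n : ℕ) (x x1 : Fin d → ℝ) : ℝ :=
  ∑ k ∈ Finset.range (n + 1),
    (1 / (Nat.factorial k : ℝ)) * iteratedFDeriv ℝ k g x (fun _ => x1 - x)

/-- The Hölder class `Σ(β,K,[0,1]^d)`. -/
def HolderSigma (d : ℕ) (β K : ℝ) (g : (Fin d → ℝ) → ℝ) : Prop :=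
  ContDiff ℝ (⌊β⌋₊ : ℕ) g ∧
    ∀ x ∈ cube d, ∀ x1 ∈ cube d, |g x1 - taylorP d g ⌊β⌋₊ x x1| ≤ K * ‖x - x1‖ ^ β

/-- The Hölder condition for exponent `0 < β ≤ 1` with constant `L`
(`‖·‖` on `Fin d → ℝ` is the sup-norm). -/
def HolderLow (d : ℕ) (β L : ℝ) (η : (Fin d → ℝ) → ℝ) : Prop :=
  ∀ x1 ∈ cube d, ∀ x2 ∈ cube d, |η x1 - η x2| ≤ L * ‖x1 - x2‖ ^ β

/-- The class `F_m` of piecewise-constant functions over the level-`m` dyadic partition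
with values bounded by `1`. -/
def Fclass (d m : ℕ) : Set ((Fin d → ℝ) → ℝ) :=
  {f | ∃ lam : (Fin d → ℕ) → ℝ, (∀ k, |lam k| ≤ 1) ∧ f = fun x => lam (cubeIdx m x)}

/-- Empirical quadratic risk `P_N (Y - f(X))²`. -/
def empRisk {d : ℕ} (N : ℕ) (ω : Fin N → ((Fin d → ℝ) × ℝ)) (f : (Fin d → ℝ) → ℝ) : ℝ :=
  (∑ j, ((ω j).2 - f (ω j).1) ^ 2) / N

/-- The set `J(N)` of admissible resolution levels. -/
def Jset (d N : ℕ) : Set ℕ :=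
  {m | 1 ≤ (2 : ℝ) ^ (d * m) ∧ (2 : ℝ) ^ (d * m) ≤ (N : ℝ) / (Real.log N) ^ 2}

/-- The penalized model-selection criterion with constant `K1`
(`s_m = m (s + log log₂ N)`). -/
def crit {d : ℕ} (K1 s : ℝ) (N : ℕ) (ω : Fin N → ((Fin d → ℝ) × ℝ)) (m : ℕ) : ℝ :=
  (⨅ f ∈ Fclass d m, empRisk N ω f) +
    K1 * ((2 : ℝ) ^ (d * m) + m * (s + Real.log (Real.logb 2 N))) / N

/-- `inf_{f ∈ F_m} E (f(X) - η(X))²`. -/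
def approxErr {d : ℕ} (μ : Measure (Fin d → ℝ)) (η : (Fin d → ℝ) → ℝ) (m : ℕ) : ℝ :=
  ⨅ f ∈ Fclass d m, ∫ x, (f x - η x) ^ 2 ∂μ

/-- `m̄ = min {m ≥ 1 : inf_{f ∈ F_m} E(f(X)-η(X))² ≤ K2 2^{dm}/N}`. -/
def mbar {d : ℕ} (K2 : ℝ) (N : ℕ) (μ : Measure (Fin d → ℝ)) (η : (Fin d → ℝ) → ℝ) : ℕ :=
  sInf {m | 1 ≤ m ∧ approxErr μ η m ≤ K2 * (2 : ℝ) ^ (d * m) / N}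

/-- Membership in the class `P*_U(β,γ)` (with Hölder smoothness stated for general `β`
via Taylor polynomials), for the pair (marginal `μ`, regression function `η`). -/
def InStarClass (d : ℕ) (β γ B K u1 u2 B2 : ℝ) (μ : Measure (Fin d → ℝ))
    (η : (Fin d → ℝ) → ℝ) : Prop :=
  IsProbabilityMeasure μ ∧ μ (cube d) = 1 ∧ Measurable η ∧
    (∀ x, η x ∈ Set.Icc (-1 : ℝ) 1) ∧ LowNoise B γ μ η ∧ HolderSigma d β K η ∧
    Regular d u1 u2 μ ∧ Assumption2 d B2 μ η

/-- Membership in the class `P*_U(β,γ)` for `0 < β ≤ 1`, with Hölder constant `B1`. -/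
def InStarClassLow (d : ℕ) (β γ B B1 u1 u2 B2 : ℝ) (μ : Measure (Fin d → ℝ))
    (η : (Fin d → ℝ) → ℝ) : Prop :=
  IsProbabilityMeasure μ ∧ μ (cube d) = 1 ∧ Measurable η ∧
    (∀ x, η x ∈ Set.Icc (-1 : ℝ) 1) ∧ LowNoise B γ μ η ∧ HolderLow d β B1 η ∧
    Regular d u1 u2 μ ∧ Assumption2 d B2 μ η

/-! The excess risk of `f` over the plug-in classifier `sgn η` is `∫_{sgn f ≠ sgn η} |η| dΠ`, and
`sgn η` competes in the Bayes infimum. On the disagreement set `D`, the points with `|η| ≤ t` have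
mass at most `B t ^ γ`; choosing `t` with `B t ^ γ = Π(D) / 2` leaves mass `Π(D) / 2` on which
`|η| > t`, so the excess risk is at least `t Π(D) / 2`, a constant times `Π(D) ^ (1 + 1 / γ)`. -/

lemma sgn_eq_one_or_eq_neg_one (t : ℝ) : sgn t = 1 ∨ sgn t = -1 := by
  unfold sgn; split <;> simp

lemma abs_sgn (t : ℝ) : |sgn t| = 1 := by
  rcases sgn_eq_one_or_eq_neg_one t with h | h <;> simp [h]

lemma mul_sgn_self (t : ℝ) : t * sgn t = |t| := by
  unfold sgn; split
  · rw [abs_of_pos ‹_›, mul_one]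
  · rw [abs_of_nonpos (not_lt.1 ‹_›), mul_neg_one]

lemma _root_.Measurable.sgn {α : Type*} [MeasurableSpace α] {f : α → ℝ} (hf : Measurable f) :
    Measurable fun x => sgn (f x) :=
  Measurable.ite (measurableSet_lt measurable_const hf) measurable_const measurable_const

lemma measurableSet_sgn_ne {α : Type*} [MeasurableSpace α] {f g : α → ℝ} (hf : Measurable f)
    (hg : Measurable g) : MeasurableSet {x | sgn (f x) ≠ sgn (g x)} :=
  (measurableSet_eq_fun hf.sgn hg.sgn).compl

lemma integral_two_mul_indicator_sub {α : Type*} [MeasurableSpace α] {μ : Measure α}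
    {g : α → ℝ} (hg : Integrable g μ) {s : Set α} (hs : MeasurableSet s) :
    ∫ x, 2 * s.indicator g x - g x ∂μ = 2 * ∫ x in s, g x ∂μ - ∫ x, g x ∂μ := by
  rw [integral_sub ((hg.indicator hs).const_mul 2) hg, integral_const_mul, integral_indicator hs]

lemma IsRegressionOf.integral_snd_mul_sgn {P : Measure ((Fin d → ℝ) × ℝ)}
    {η : (Fin d → ℝ) → ℝ} (hη : IsRegressionOf η P) (hY : Integrable (fun p => p.2) P)
    (hηi : Integrable η (P.map Prod.fst)) {f : (Fin d → ℝ) → ℝ} (hf : Measurable f) :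
    ∫ p, p.2 * sgn (f p.1) ∂P = ∫ x, η x * sgn (f x) ∂(P.map Prod.fst) := by
  set A := {x | 0 < f x}
  have hA : MeasurableSet A := measurableSet_lt measurable_const hf
  -- `sgn (f x) = 2 𝟙_A(x) - 1` reduces both sides to regression integrals over `A` and over everything
  have hsgnY : ∀ p : (Fin d → ℝ) × ℝ,
      p.2 * sgn (f p.1) = 2 * (Prod.fst ⁻¹' A).indicator (fun q => q.2) p - p.2 := by
    intro p
    unfold sgn; split_ifs with h <;> simp [A, h]; ring
  have hsgnη : ∀ x, η x * sgn (f x) = 2 * A.indicator η x - η x := by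
    intro x
    unfold sgn; split_ifs with h <;> simp [A, h]; ring
  have huniv : ∫ p, p.2 ∂P = ∫ x, η x ∂(P.map Prod.fst) := by
    simpa using hη univ MeasurableSet.univ
  simp only [hsgnY, hsgnη]
  rw [integral_two_mul_indicator_sub hY (measurable_fst hA), integral_two_mul_indicator_sub hηi hA,
    hη A hA, huniv]

namespace GoodPair

variable {P : Measure ((Fin d → ℝ) × ℝ)} {η : (Fin d → ℝ) → ℝ}

lemma isProbabilityMeasure_map_fst (hP : GoodPair d P η) : IsProbabilityMeasure (P.map Prod.fst) :=
  have := hP.1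
  Measure.isProbabilityMeasure_map measurable_fst.aemeasurable

lemma integrable_snd (hP : GoodPair d P η) : Integrable (fun p => p.2) P := by
  have := hP.1
  refine Integrable.of_bound measurable_snd.aestronglyMeasurable 1 (hP.2.2.2.1.mono fun p hp => ?_)
  rcases hp.2 with h | h <;> simp [h]

lemma integrable_regression (hP : GoodPair d P η) : Integrable η (P.map Prod.fst) := by
  have := hP.isProbabilityMeasure_map_fst
  exact Integrable.of_bound hP.2.1.aestronglyMeasurable 1
    (ae_of_all _ fun x => abs_le.2 (hP.2.2.1 x))

lemma integrable_regression_mul_sgn (hP : GoodPair d P η) {g : (Fin d → ℝ) → ℝ}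
    (hg : Measurable g) : Integrable (fun x => η x * sgn (g x)) (P.map Prod.fst) :=
  hP.integrable_regression.mul_bdd hg.sgn.aestronglyMeasurable
    (ae_of_all _ fun x => (abs_sgn (g x)).le)

lemma risk_eq (hP : GoodPair d P η) {f : (Fin d → ℝ) → ℝ} (hf : Measurable f) :
    risk P f = (1 - ∫ x, η x * sgn (f x) ∂(P.map Prod.fst)) / 2 := by
  have := hP.1
  have hS : MeasurableSet {p : (Fin d → ℝ) × ℝ | p.2 ≠ sgn (f p.1)} :=
    (measurableSet_eq_fun measurable_snd (hf.sgn.comp measurable_fst)).compl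
  have hYS : Integrable (fun p : (Fin d → ℝ) × ℝ => p.2 * sgn (f p.1)) P :=
    hP.integrable_snd.mul_bdd (hf.sgn.comp measurable_fst).aestronglyMeasurable
      (ae_of_all _ fun p => (abs_sgn (f p.1)).le)
  have hind : {p : (Fin d → ℝ) × ℝ | p.2 ≠ sgn (f p.1)}.indicator 1
      =ᵐ[P] fun p => (1 - p.2 * sgn (f p.1)) / 2 := by
    filter_upwards [hP.2.2.2.1] with p hp
    rcases hp.2 with hy | hy <;> rcases sgn_eq_one_or_eq_neg_one (f p.1) with hs | hs <;>
      simp [indicator_apply, hy, hs] <;> norm_num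
  rw [← hP.2.2.2.2.integral_snd_mul_sgn hP.integrable_snd hP.integrable_regression hf, risk,
    ← measureReal_def, ← integral_indicator_one hS, integral_congr_ae hind, integral_div,
    integral_sub (integrable_const 1) hYS, integral_const, probReal_univ, one_smul]

lemma risk_sub_risk_eq_setIntegral (hP : GoodPair d P η) {f : (Fin d → ℝ) → ℝ}
    (hf : Measurable f) :
    risk P f - risk P η =
      ∫ x in {x | sgn (f x) ≠ sgn (η x)}, |η x| ∂(P.map Prod.fst) := by
  have hD := measurableSet_sgn_ne hf hP.2.1
  have key : ∀ x, (η x * sgn (η x) - η x * sgn (f x)) / 2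
      = {x | sgn (f x) ≠ sgn (η x)}.indicator (fun x => |η x|) x := by
    intro x
    by_cases h : sgn (f x) = sgn (η x)
    · simp [h]
    · have hneg : sgn (f x) = -sgn (η x) := by
        rcases sgn_eq_one_or_eq_neg_one (f x) with h1 | h1 <;>
          rcases sgn_eq_one_or_eq_neg_one (η x) with h2 | h2 <;> simp_all
      rw [indicator_of_mem h, hneg, ← mul_sgn_self]
      ring
  rw [hP.risk_eq hf, hP.risk_eq hP.2.1, ← integral_indicator hD, ← integral_congr_ae (ae_of_all _ key),
    integral_div, integral_sub (hP.integrable_regression_mul_sgn hP.2.1)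
      (hP.integrable_regression_mul_sgn hf)]
  ring

end GoodPair

lemma bayesRisk_le_risk (P : Measure ((Fin d → ℝ) × ℝ)) {g : (Fin d → ℝ) → ℝ}
    (hg : Measurable g) (hg1 : ∀ x, g x ∈ Icc (-1 : ℝ) 1) : bayesRisk P ≤ risk P g :=
  ciInf_le ⟨0, by rintro _ ⟨_, rfl⟩; exact ENNReal.toReal_nonneg⟩
    (⟨g, hg, hg1⟩ : {g : (Fin d → ℝ) → ℝ // Measurable g ∧ ∀ x, g x ∈ Icc (-1 : ℝ) 1})

section LowNoise

variable {α : Type*} [MeasurableSpace α] {μ : Measure α} [IsFiniteMeasure μ] {g : α → ℝ}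
  {D : Set α}

lemma mul_sub_measureReal_le_setIntegral (hg : Measurable g) (hg0 : 0 ≤ g)
    (hgi : Integrable g μ) (hD : MeasurableSet D) {t : ℝ} (ht : 0 ≤ t) :
    t * (μ.real D - μ.real {x | g x ≤ t}) ≤ ∫ x in D, g x ∂μ := by
  set E := D ∩ {x | t < g x}
  have hE : MeasurableSet E := hD.inter (measurableSet_lt measurable_const hg)
  have hDE : μ.real D - μ.real {x | g x ≤ t} ≤ μ.real E := by
    have : D ⊆ E ∪ {x | g x ≤ t} := fun x hx => (lt_or_ge t (g x)).imp (fun h => ⟨hx, h⟩) id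
    linarith [(measureReal_mono this (measure_ne_top μ _)).trans (measureReal_union_le E _)]
  calc t * (μ.real D - μ.real {x | g x ≤ t}) ≤ t * μ.real E := by gcongr
    _ ≤ ∫ x in E, g x ∂μ :=
      setIntegral_ge_of_const_le_real hE (measure_ne_top _ _) (fun x hx => hx.2.le) hgi.integrableOn
    _ ≤ ∫ x in D, g x ∂μ :=
      setIntegral_mono_set hgi.integrableOn (ae_of_all _ hg0) inter_subset_left.eventuallyLE

lemma const_mul_rpow_measureReal_le_setIntegral {B γ : ℝ} (hB : 0 < B) (hγ : 0 < γ)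
    (hg : Measurable g) (hg0 : 0 ≤ g) (hgi : Integrable g μ) (hD : MeasurableSet D)
    (hlow : ∀ t, 0 < t → μ {x | g x ≤ t} ≤ ENNReal.ofReal (B * t ^ γ)) :
    (1 / (2 * B)) ^ (1 / γ) / 2 * μ.real D ^ ((1 + γ) / γ) ≤ ∫ x in D, g x ∂μ := by
  set δ := μ.real D
  rcases (show 0 ≤ δ from measureReal_nonneg).eq_or_lt with hδ | hδ
  · rw [← hδ, Real.zero_rpow (by positivity), mul_zero]
    exact setIntegral_nonneg hD fun x _ => hg0 x
  set t := (δ / (2 * B)) ^ (1 / γ)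
  have ht : 0 < t := by positivity
  have hBt : B * t ^ γ = δ / 2 := by
    rw [← Real.rpow_mul (by positivity), one_div_mul_cancel hγ.ne', Real.rpow_one]
    field_simp
  have hsmall : μ.real {x | g x ≤ t} ≤ δ / 2 := by
    rw [← hBt]
    exact ENNReal.toReal_le_of_le_ofReal (by positivity) (hlow t ht)
  calc (1 / (2 * B)) ^ (1 / γ) / 2 * δ ^ ((1 + γ) / γ) = t * (δ - δ / 2) := by
        have ht' : t = δ ^ (1 / γ) * (1 / (2 * B)) ^ (1 / γ) := by
          rw [← Real.mul_rpow hδ.le (by positivity), ← div_eq_mul_one_div]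
        rw [show (1 + γ) / γ = 1 / γ + 1 by field_simp, Real.rpow_add hδ, Real.rpow_one, ht']
        ring
    _ ≤ t * (δ - μ.real {x | g x ≤ t}) := by gcongr
    _ ≤ ∫ x in D, g x ∂μ := mul_sub_measureReal_le_setIntegral hg hg0 hgi hD ht.le

end LowNoise

/-- comparison inequality, lower bound via measure of disagreement. -/
theorem statement2 (B γ : ℝ) (hB : 0 < B) (hγ : 0 < γ) :
    ∃ D3 : ℝ, 0 < D3 ∧
      ∀ (d : ℕ) (P : Measure ((Fin d → ℝ) × ℝ)) (η : (Fin d → ℝ) → ℝ),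
        GoodPair d P η →
        LowNoise B γ (P.map Prod.fst) η →
        ∀ f : (Fin d → ℝ) → ℝ, Measurable f → (∃ M : ℝ, ∀ x, |f x| ≤ M) →
          D3 * ((P.map Prod.fst) {x | sgn (f x) ≠ sgn (η x)}).toReal ^ ((1 + γ) / γ) ≤
            risk P f - bayesRisk P := by
  refine ⟨(1 / (2 * B)) ^ (1 / γ) / 2, by positivity, ?_⟩
  intro d P η hP hLN f hf _
  have := hP.isProbabilityMeasure_map_fst
  calc _ ≤ ∫ x in {x | sgn (f x) ≠ sgn (η x)}, |η x| ∂(P.map Prod.fst) :=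
        const_mul_rpow_measureReal_le_setIntegral hB hγ hP.2.1.abs (fun x => abs_nonneg _)
          hP.integrable_regression.abs (measurableSet_sgn_ne hf hP.2.1) hLN
    _ = risk P f - risk P η := (hP.risk_sub_risk_eq_setIntegral hf).symm
    _ ≤ risk P f - bayesRisk P := sub_le_sub_left (bayesRisk_le_risk P hP.2.1 hP.2.2.1) _

end ActivePlugIn
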